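/- arXiv:2504.00470 — 2 statements merged into one kernel-verified Lean document; each statement's English description precedes it below -/
import Mathlib

section
/- Greedy guarantee for monotone submodular maximization: let F : 2^V → ℝ be monotone non-decreasing and submodular with F(∅) = 0, and let S_k be the set built by the greedy algorithm that starts from ∅ and at each of k steps adds the element maximizing the marginal gain. Then F(S_k) ≥ (1 − (1 − 1/k)^k) · max_{|S| ≤ k} F(S) ≥ (1 − 1/e) · max_{|S| ≤ k} F(S). -/
/-- Nemhauser–Wolsey–Fisher greedy guarantee for monotone submodular maximization. -/
theorem stmt_4 {V : Type*} [Fintype V] [DecidableEq V] (F : Finset V → ℝ) (k : ℕ)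
    (hk : 1 ≤ k) (hkV : k ≤ Fintype.card V)
    (hsub : ∀ Sa Sb : Finset V, Sa ⊆ Sb → ∀ α ∉ Sb,
      F (insert α Sb) - F Sb ≤ F (insert α Sa) - F Sa)
    (hmono : ∀ A B : Finset V, A ⊆ B → F A ≤ F B)
    (h0 : F ∅ = 0)
    (S : ℕ → Finset V) (hS0 : S 0 = ∅)
    (hgreedy : ∀ i < k, ∃ α ∉ S i, S (i + 1) = insert α (S i) ∧
      ∀ β ∉ S i, F (insert β (S i)) ≤ F (insert α (S i))) :
    ∀ T : Finset V, T.card ≤ k →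
      (1 - (1 - 1 / (k : ℝ)) ^ k) * F T ≤ F (S k) ∧
      (1 - 1 / Real.exp 1) * F T ≤ F (S k) := by
  have hFnn : ∀ A : Finset V, 0 ≤ F A := fun A => h0 ▸ hmono ∅ A (Finset.empty_subset A)
  have hk' : (1:ℝ) ≤ (k:ℝ) := by exact_mod_cast hk
  have hkpos : (0:ℝ) < (k:ℝ) := by linarith
  -- telescoping submodularity
  have tele : ∀ T A : Finset V, F (A ∪ T) - F A ≤ ∑ e ∈ T, (F (insert e A) - F A) := by
    intro T
    induction T using Finset.induction_on with
    | empty => intro A; simp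
    | @insert x T' hx ih =>
      intro A
      rw [Finset.sum_insert hx]
      have h1 : A ∪ insert x T' = insert x (A ∪ T') := by ext y; simp [or_left_comm]
      by_cases hxA : x ∈ A ∪ T'
      · have h2 : insert x (A ∪ T') = A ∪ T' := Finset.insert_eq_self.mpr hxA
        have h3 : 0 ≤ F (insert x A) - F A := by
          have := hmono A (insert x A) (Finset.subset_insert x A); linarith
        have := ih A
        rw [h1, h2]; linarith
      · have h2 := hsub A (A ∪ T') Finset.subset_union_left x hxA
        have := ih A
        rw [h1]; linarith
  intro T hTk
  have key : ∀ i < k, F T - F (S i) ≤ (k:ℝ) * (F (S (i+1)) - F (S i)) := by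
    intro i hi
    obtain ⟨α, hα, hSeq, hmax⟩ := hgreedy i hi
    have gnn : 0 ≤ F (insert α (S i)) - F (S i) := by
      have := hmono (S i) (insert α (S i)) (Finset.subset_insert _ _); linarith
    have h1 : F T ≤ F (S i ∪ T) := hmono T _ Finset.subset_union_right
    have h2 := tele T (S i)
    have h3 : ∑ e ∈ T, (F (insert e (S i)) - F (S i)) ≤
        ∑ _e ∈ T, (F (insert α (S i)) - F (S i)) := by
      apply Finset.sum_le_sum
      intro e _
      by_cases heS : e ∈ S i
      · rw [Finset.insert_eq_self.mpr heS]; linarith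
      · have := hmax e heS; linarith
    rw [Finset.sum_const, nsmul_eq_mul] at h3
    have hcard : (T.card : ℝ) ≤ (k:ℝ) := by exact_mod_cast hTk
    have h4 : (T.card : ℝ) * (F (insert α (S i)) - F (S i)) ≤
        (k:ℝ) * (F (insert α (S i)) - F (S i)) :=
      mul_le_mul_of_nonneg_right hcard gnn
    rw [hSeq]
    linarith
  set c : ℝ := 1 - 1/(k:ℝ) with hc
  have hc0 : 0 ≤ c := by
    have : 1/(k:ℝ) ≤ 1 := by rw [div_le_one hkpos]; exact hk'
    simp only [hc]; linarith
  have main : ∀ i ≤ k, F T - F (S i) ≤ c ^ i * F T := by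
    intro i
    induction i with
    | zero => intro _; simp [hS0, h0]
    | succ n ih =>
      intro hn
      have hnk : n < k := hn
      have hk1 := key n hnk
      have ih' := ih (Nat.le_of_succ_le hn)
      have hdiv : (F T - F (S n)) / (k:ℝ) ≤ F (S (n+1)) - F (S n) :=
        (div_le_iff₀ hkpos).mpr (by linarith [hk1])
      have heq : c * (F T - F (S n)) = (F T - F (S n)) - (F T - F (S n))/(k:ℝ) := by
        rw [hc]; ring
      have step : F T - F (S (n+1)) ≤ c * (F T - F (S n)) := by
        rw [heq]; linarith
      have step2 : c * (F T - F (S n)) ≤ c * (c ^ n * F T) :=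
        mul_le_mul_of_nonneg_left ih' hc0
      calc F T - F (S (n+1)) ≤ c * (c ^ n * F T) := le_trans step step2
        _ = c ^ (n+1) * F T := by ring
  have hmk := main k le_rfl
  have part1 : (1 - c ^ k) * F T ≤ F (S k) := by
    have : (1 - c ^ k) * F T = F T - c ^ k * F T := by ring
    rw [this]; linarith
  refine ⟨part1, ?_⟩
  have hce : c ≤ Real.exp (-(1/(k:ℝ))) := by
    have := Real.add_one_le_exp (-(1/(k:ℝ)))
    simp only [hc]; linarith
  have hck : c ^ k ≤ 1 / Real.exp 1 := by
    calc c ^ k ≤ (Real.exp (-(1/(k:ℝ)))) ^ k := pow_le_pow_left₀ hc0 hce k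
      _ = Real.exp ((k:ℝ) * (-(1/(k:ℝ)))) := (Real.exp_nat_mul _ k).symm
      _ = Real.exp (-1) := by congr 1; field_simp
      _ = 1 / Real.exp 1 := by rw [Real.exp_neg]; rw [one_div]
  have : (1 - 1 / Real.exp 1) * F T ≤ (1 - c ^ k) * F T :=
    mul_le_mul_of_nonneg_right (by linarith) (hFnn T)
  linarith
end

section
/- Key inequality in the greedy analysis: if F is monotone non-decreasing and submodular with F(∅)=0, S* is any set with |S*| = k, and S is any set, then F(S*) ≤ F(S) + Σ_{α ∈ S* \ S} (F(S ∪ {α}) − F(S)). In particular, F(S*) − F(S) ≤ k · max_{α ∈ S* \ S} (F(S ∪ {α}) − F(S)). -/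
/-- Key inequality in the greedy analysis for monotone submodular functions. -/
theorem stmt_5 {V : Type*} [DecidableEq V] (F : Finset V → ℝ) (k : ℕ)
    (hsub : ∀ Sa Sb : Finset V, Sa ⊆ Sb → ∀ α ∉ Sb,
      F (insert α Sb) - F Sb ≤ F (insert α Sa) - F Sa)
    (hmono : ∀ A B : Finset V, A ⊆ B → F A ≤ F B)
    (h0 : F ∅ = 0)
    (S Sstar : Finset V) (hcard : Sstar.card = k) :
    F Sstar ≤ F S + ∑ α ∈ Sstar \ S, (F (insert α S) - F S) ∧
    ∀ h : (Sstar \ S).Nonempty,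
      F Sstar - F S ≤ (k : ℝ) * (Sstar \ S).sup' h (fun α => F (insert α S) - F S) := by
  have key : ∀ T : Finset V, F (S ∪ T) ≤ F S + ∑ α ∈ T \ S, (F (insert α S) - F S) := by
    intro T
    induction T using Finset.induction_on with
    | empty => simp
    | @insert a T ha ih =>
      by_cases haS : a ∈ S
      · have h1 : S ∪ insert a T = S ∪ T := by
          ext x; simp only [Finset.mem_union, Finset.mem_insert]
          constructor
          · rintro (h | rfl | h) <;> simp_all
          · rintro (h | h) <;> simp_all
        have h2 : insert a T \ S = T \ S := by
          ext x; simp only [Finset.mem_sdiff, Finset.mem_insert]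
          constructor
          · rintro ⟨rfl | h, hx⟩ <;> simp_all
          · rintro ⟨h, hx⟩; exact ⟨Or.inr h, hx⟩
        rw [h1, h2]; exact ih
      · have hnot : a ∉ S ∪ T := by simp [haS, ha]
        have h1 : S ∪ insert a T = insert a (S ∪ T) := Finset.union_insert a S T
        have h2 : insert a T \ S = insert a (T \ S) :=
          Finset.insert_sdiff_of_notMem _ haS
        have hanT : a ∉ T \ S := by simp [ha]
        rw [h1, h2, Finset.sum_insert hanT]
        have := hsub S (S ∪ T) Finset.subset_union_left a hnot
        linarith
  have h1 : F Sstar ≤ F S + ∑ α ∈ Sstar \ S, (F (insert α S) - F S) := by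
    have := key Sstar
    have hm := hmono Sstar (S ∪ Sstar) Finset.subset_union_right
    linarith
  refine ⟨h1, fun h => ?_⟩
  set M := (Sstar \ S).sup' h (fun α => F (insert α S) - F S) with hM
  have hMnonneg : 0 ≤ M := by
    obtain ⟨a, haa⟩ := h
    have : F S ≤ F (insert a S) := hmono _ _ (Finset.subset_insert a S)
    calc (0:ℝ) ≤ F (insert a S) - F S := by linarith
    _ ≤ M := Finset.le_sup' (fun α => F (insert α S) - F S) haa
  have hsum : ∑ α ∈ Sstar \ S, (F (insert α S) - F S) ≤ (Sstar \ S).card * M := by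
    calc ∑ α ∈ Sstar \ S, (F (insert α S) - F S) ≤ ∑ _α ∈ Sstar \ S, M :=
          Finset.sum_le_sum (fun i hi => Finset.le_sup' (fun α => F (insert α S) - F S) hi)
    _ = (Sstar \ S).card * M := by rw [Finset.sum_const, nsmul_eq_mul]
  have hck : (Sstar \ S).card ≤ k := hcard ▸ Finset.card_le_card (Finset.sdiff_subset)
  have : ((Sstar \ S).card : ℝ) * M ≤ (k : ℝ) * M :=
    mul_le_mul_of_nonneg_right (by exact_mod_cast hck) hMnonneg
  linarith
end
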